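/- Let d ≥ 2 and let f : ℝ^d → ℂ be continuous with compact support contained in the open half-space {p ∈ ℝ^d : p⁰ + p^{d−1} > 0}. Then the Lebesgue integral of f over ℝ^d decomposes over the mass shells: ∫_{ℝ^d} f(p) dp = ∫_{−∞}^{∞} ( ∫_{ℝ^{d−2} × (0,∞)} f( ℓ⁻¹( (|p̃|² + r)/(2p⁺), p̃, p⁺ ) ) · (2p⁺)^{−1} dp̃ dp⁺ ) dr. -/

import Mathlib

open MeasureTheory

noncomputable section

/-- The point of `ℝ^{k+2}` with light-cone data `(p⁻, p̃, p⁺)`: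
`ℓ⁻¹(p⁻, p̃, p⁺) = ((p⁺ + p⁻)/√2, p¹, …, p^{d−2}, (p⁺ − p⁻)/√2)`. -/
def linv {k : ℕ} (pm : ℝ) (pt : EuclideanSpace ℝ (Fin k)) (pp : ℝ) :
    EuclideanSpace ℝ (Fin (k + 2)) :=
  WithLp.toLp 2 (Fin.cons ((pp + pm) / Real.sqrt 2)
    (Fin.snoc pt.ofLp ((pp - pm) / Real.sqrt 2)) : Fin (k + 2) → ℝ)

/-!
Write `p = ℓ⁻¹(p⁻, p̃, p⁺)`. Up to a permutation of coordinates, `ℓ⁻¹` is the map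
`(p⁺, p⁻) ↦ ((p⁺ + p⁻)/√2, (p⁺ - p⁻)/√2)` of determinant `-1`, so it preserves Lebesgue measure
and Fubini gives `∫ f = ∫∫ f(ℓ⁻¹(p⁻, p̃, p⁺)) dp⁻ d(p̃, p⁺)`; the support condition kills the
region `p⁺ ≤ 0`. Since `-η(p, p) = 2p⁺p⁻ - |p̃|²`, for fixed `p⁺ > 0` the substitution
`p⁻ = (|p̃|² + r)/(2p⁺)` is affine with Jacobian `(2p⁺)⁻¹`, and a second application of Fubini,
justified by the integrability of `f`, moves the `r`-integral outside.
-/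

lemma integral_smul_comp_add_div {E : Type*} [NormedAddCommGroup E] [NormedSpace ℝ E]
    (g : ℝ → E) (b : ℝ) {a : ℝ} (ha : 0 < a) : ∫ r, a⁻¹ • g ((b + r) / a) = ∫ s, g s := by
  rw [integral_smul, integral_add_left_eq_self (fun r ↦ g (r / a)) b,
    Measure.integral_comp_div, abs_of_pos ha, inv_smul_smul₀ ha.ne']

lemma Integrable.smul_comp_add_div {E : Type*} [NormedAddCommGroup E] [NormedSpace ℝ E]
    {g : ℝ → E} (hg : Integrable g) (b : ℝ) {a : ℝ} (ha : a ≠ 0) :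
    Integrable fun r ↦ a⁻¹ • g ((b + r) / a) :=
  ((hg.comp_div ha).comp_add_left b).smul a⁻¹

namespace LightCone

variable {k : ℕ}

/-- In light-cone coordinates, `(p⁺, p⁻) ↦ (p⁰, p^{d−1})`. -/
def rotation : (ℝ × ℝ) →ₗ[ℝ] ℝ × ℝ where
  toFun z := ((z.1 + z.2) / √2, (z.1 - z.2) / √2)
  map_add' x y := by ext <;> simp only [Prod.fst_add, Prod.snd_add] <;> ring
  map_smul' c x := by ext <;> simp only [Prod.smul_fst, Prod.smul_snd, smul_eq_mul,
    RingHom.id_apply] <;> ring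

lemma rotation_apply (z : ℝ × ℝ) : rotation z = ((z.1 + z.2) / √2, (z.1 - z.2) / √2) := rfl

lemma det_rotation : LinearMap.det rotation = -1 := by
  rw [← LinearMap.det_toMatrix (Module.Basis.finTwoProd ℝ), Matrix.det_fin_two]
  norm_num [LinearMap.toMatrix_apply, rotation_apply, Module.Basis.finTwoProd, div_eq_mul_inv,
    ← mul_inv]

lemma rotation_rotation (z : ℝ × ℝ) : rotation (rotation z) = z := by
  have h : √2 ^ 2 = 2 := Real.sq_sqrt zero_le_two
  ext <;> simp only [rotation_apply] <;> field_simp <;> rw [h] <;> ring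

def rotationEquiv : (ℝ × ℝ) ≃ᵐ ℝ × ℝ where
  toFun := rotation
  invFun := rotation
  left_inv := rotation_rotation
  right_inv := rotation_rotation
  measurable_toFun := rotation.continuous_of_finiteDimensional.measurable
  measurable_invFun := rotation.continuous_of_finiteDimensional.measurable

lemma measurePreserving_rotationEquiv : MeasurePreserving rotationEquiv := by
  refine ⟨rotationEquiv.measurable, ?_⟩
  change Measure.map rotation volume = volume
  rw [Measure.map_linearMap_addHaar_eq_smul_addHaar _ (by simp [det_rotation]), det_rotation]
  norm_num

def consSnocEquiv (k : ℕ) : ℝ × ℝ × EuclideanSpace ℝ (Fin k) ≃ᵐ EuclideanSpace ℝ (Fin (k + 2)) :=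
  (MeasurableEquiv.prodCongr (.refl ℝ)
    ((MeasurableEquiv.prodCongr (.refl ℝ) (MeasurableEquiv.toLp 2 (Fin k → ℝ)).symm).trans
      (MeasurableEquiv.piFinSuccAbove (fun _ ↦ ℝ) (Fin.last k)).symm)).trans
  ((MeasurableEquiv.piFinSuccAbove (fun _ ↦ ℝ) 0).symm.trans (MeasurableEquiv.toLp 2 _))

lemma consSnocEquiv_apply (a b : ℝ) (t : EuclideanSpace ℝ (Fin k)) :
    consSnocEquiv k (a, b, t) = WithLp.toLp 2 (Fin.cons a (Fin.snoc t.ofLp b)) := by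
  change WithLp.toLp 2 (Fin.insertNth (α := fun _ ↦ ℝ) 0 a
    (Fin.insertNth (α := fun _ ↦ ℝ) (Fin.last k) b t.ofLp)) = _
  rw [Fin.insertNth_zero', Fin.insertNth_last']

lemma measurePreserving_consSnocEquiv : MeasurePreserving (consSnocEquiv k) := by
  have hinner := (volume_preserving_piFinSuccAbove (fun _ : Fin (k + 1) ↦ ℝ) (Fin.last k)).symm.comp
    ((MeasurePreserving.id volume).prod
      (EuclideanSpace.volume_preserving_symm_measurableEquiv_toLp (Fin k)))
  exact ((EuclideanSpace.volume_preserving_symm_measurableEquiv_toLp (Fin (k + 2))).symm.comp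
    (volume_preserving_piFinSuccAbove (fun _ : Fin (k + 2) ↦ ℝ) 0).symm).comp
    ((MeasurePreserving.id volume).prod hinner)

def linvEquiv (k : ℕ) : (EuclideanSpace ℝ (Fin k) × ℝ) × ℝ ≃ᵐ EuclideanSpace ℝ (Fin (k + 2)) :=
  MeasurableEquiv.prodAssoc.trans <| (MeasurableEquiv.prodCongr (.refl _) rotationEquiv).trans <|
    MeasurableEquiv.prodComm.trans <| MeasurableEquiv.prodAssoc.trans (consSnocEquiv k)

lemma linvEquiv_apply (z : (EuclideanSpace ℝ (Fin k) × ℝ) × ℝ) :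
    linvEquiv k z = linv z.2 z.1.1 z.1.2 :=
  consSnocEquiv_apply _ _ _

lemma measurePreserving_linvEquiv : MeasurePreserving (linvEquiv k) :=
  measurePreserving_consSnocEquiv.comp <| volume_preserving_prodAssoc.comp <|
    Measure.measurePreserving_swap.comp <|
      ((MeasurePreserving.id volume).prod measurePreserving_rotationEquiv).comp
        volume_preserving_prodAssoc

lemma integrable_comp_linv {E : Type*} [NormedAddCommGroup E]
    {f : EuclideanSpace ℝ (Fin (k + 2)) → E} (hf : Integrable f) :
    Integrable fun z : (EuclideanSpace ℝ (Fin k) × ℝ) × ℝ ↦ f (linv z.2 z.1.1 z.1.2) := by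
  simpa only [Function.comp_def, linvEquiv_apply] using
    (measurePreserving_linvEquiv.integrable_comp_emb (linvEquiv k).measurableEmbedding).2 hf

lemma integral_eq_integral_integral_linv {E : Type*} [NormedAddCommGroup E] [NormedSpace ℝ E]
    {f : EuclideanSpace ℝ (Fin (k + 2)) → E} (hf : Integrable f) :
    ∫ p, f p = ∫ x : EuclideanSpace ℝ (Fin k) × ℝ, ∫ pm, f (linv pm x.1 x.2) := by
  rw [← measurePreserving_linvEquiv.integral_comp' f]
  simp only [linvEquiv_apply]
  exact integral_prod _ (integrable_comp_linv hf)

lemma linv_zero_add_linv_last (pm : ℝ) (t : EuclideanSpace ℝ (Fin k)) (pp : ℝ) :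
    linv pm t pp 0 + linv pm t pp (Fin.last (k + 1)) = √2 * pp := by
  have h : √2 ^ 2 = 2 := Real.sq_sqrt zero_le_two
  rw [← Fin.succ_last]
  simp only [linv, Fin.cons_zero, Fin.cons_succ, Fin.snoc_last]
  field_simp
  rw [h]
  ring

lemma apply_linv_eq_zero_of_nonpos {E : Type*} [Zero E] {f : EuclideanSpace ℝ (Fin (k + 2)) → E}
    (hf : tsupport f ⊆ {p | 0 < p 0 + p (Fin.last (k + 1))}) (pm : ℝ)
    (t : EuclideanSpace ℝ (Fin k)) {pp : ℝ} (hpp : pp ≤ 0) : f (linv pm t pp) = 0 := by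
  refine image_eq_zero_of_notMem_tsupport fun hmem ↦ ?_
  have hpos : 0 < linv pm t pp 0 + linv pm t pp (Fin.last (k + 1)) := hf hmem
  rw [linv_zero_add_linv_last] at hpos
  nlinarith [Real.sqrt_nonneg 2]

/-- The integrand of the mass shell `η(p, p) = -r` in the coordinates `x = (p̃, p⁺)`. -/
def massShellIntegrand (f : EuclideanSpace ℝ (Fin (k + 2)) → ℂ)
    (x : EuclideanSpace ℝ (Fin k) × ℝ) (r : ℝ) : ℂ :=
  f (linv ((‖x.1‖ ^ 2 + r) / (2 * x.2)) x.1 x.2) * (((2 * x.2)⁻¹ : ℝ) : ℂ)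

lemma massShellIntegrand_eq_smul (f : EuclideanSpace ℝ (Fin (k + 2)) → ℂ)
    (x : EuclideanSpace ℝ (Fin k) × ℝ) (r : ℝ) :
    massShellIntegrand f x r = (2 * x.2)⁻¹ • f (linv ((‖x.1‖ ^ 2 + r) / (2 * x.2)) x.1 x.2) := by
  rw [massShellIntegrand, Complex.real_smul, mul_comm]

lemma norm_massShellIntegrand (f : EuclideanSpace ℝ (Fin (k + 2)) → ℂ)
    {x : EuclideanSpace ℝ (Fin k) × ℝ} (hx : 0 < x.2) (r : ℝ) :
    ‖massShellIntegrand f x r‖ = (2 * x.2)⁻¹ • ‖f (linv ((‖x.1‖ ^ 2 + r) / (2 * x.2)) x.1 x.2)‖ := by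
  rw [massShellIntegrand_eq_smul, norm_smul, Real.norm_of_nonneg (by positivity), smul_eq_mul]

lemma integral_massShellIntegrand (f : EuclideanSpace ℝ (Fin (k + 2)) → ℂ)
    {x : EuclideanSpace ℝ (Fin k) × ℝ} (hx : 0 < x.2) :
    ∫ r, massShellIntegrand f x r = ∫ pm, f (linv pm x.1 x.2) := by
  simp only [massShellIntegrand_eq_smul]
  exact integral_smul_comp_add_div (fun pm ↦ f (linv pm x.1 x.2)) _ (by positivity)

lemma integral_norm_massShellIntegrand (f : EuclideanSpace ℝ (Fin (k + 2)) → ℂ)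
    {x : EuclideanSpace ℝ (Fin k) × ℝ} (hx : 0 < x.2) :
    ∫ r, ‖massShellIntegrand f x r‖ = ∫ pm, ‖f (linv pm x.1 x.2)‖ := by
  simp only [norm_massShellIntegrand f hx]
  exact integral_smul_comp_add_div (fun pm ↦ ‖f (linv pm x.1 x.2)‖) _ (by positivity)

lemma measurable_massShellIntegrand {f : EuclideanSpace ℝ (Fin (k + 2)) → ℂ} (hf : Measurable f) :
    Measurable (Function.uncurry (massShellIntegrand f)) := by
  have hlinv : Measurable fun z : (EuclideanSpace ℝ (Fin k) × ℝ) × ℝ ↦ linv z.2 z.1.1 z.1.2 := by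
    simpa only [← funext linvEquiv_apply] using (linvEquiv k).measurable
  have hpm : Measurable fun z : (EuclideanSpace ℝ (Fin k) × ℝ) × ℝ ↦
      (z.1, (‖z.1.1‖ ^ 2 + z.2) / (2 * z.1.2)) := by fun_prop
  exact (hf.comp (hlinv.comp hpm)).mul (by fun_prop)

lemma integrable_massShellIntegrand {f : EuclideanSpace ℝ (Fin (k + 2)) → ℂ} (hfm : Measurable f)
    (hf : Integrable f) :
    Integrable (Function.uncurry (massShellIntegrand f))
      ((volume.restrict {x : EuclideanSpace ℝ (Fin k) × ℝ | 0 < x.2}).prod volume) := by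
  have hS : MeasurableSet {x : EuclideanSpace ℝ (Fin k) × ℝ | 0 < x.2} :=
    measurableSet_lt measurable_const measurable_snd
  have hF := integrable_comp_linv (k := k) hf
  rw [integrable_prod_iff (measurable_massShellIntegrand hfm).aestronglyMeasurable]
  constructor
  · filter_upwards [ae_restrict_mem hS, ae_restrict_of_ae hF.prod_right_ae] with x hx hFx
    simp only [Function.uncurry_apply_pair, massShellIntegrand_eq_smul]
    exact Integrable.smul_comp_add_div hFx _ (by positivity)
  · refine hF.integral_norm_prod_left.restrict.congr ?_
    filter_upwards [ae_restrict_mem hS] with x hx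
    exact (integral_norm_massShellIntegrand f hx).symm

end LightCone

open LightCone in
/-- The Lebesgue integral of a continuous function compactly supported in the
half-space `{p : p⁰ + p^{d−1} > 0}` decomposes over the mass shells, each mass
shell integral written in the light-cone parameterization. -/
theorem statement2 (k : ℕ) (f : EuclideanSpace ℝ (Fin (k + 2)) → ℂ)
    (hf : Continuous f) (hcs : HasCompactSupport f)
    (hsupp : tsupport f ⊆ {p | 0 < p 0 + p (Fin.last (k + 1))}) :
    ∫ p, f p
      = ∫ r : ℝ, ∫ x in {x : EuclideanSpace ℝ (Fin k) × ℝ | 0 < x.2},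
          f (linv ((‖x.1‖ ^ 2 + r) / (2 * x.2)) x.1 x.2) * (((2 * x.2)⁻¹ : ℝ) : ℂ) := by
  set S := {x : EuclideanSpace ℝ (Fin k) × ℝ | 0 < x.2}
  have hfi : Integrable f := hf.integrable_of_hasCompactSupport hcs
  calc ∫ p, f p = ∫ x : EuclideanSpace ℝ (Fin k) × ℝ, ∫ pm, f (linv pm x.1 x.2) :=
        integral_eq_integral_integral_linv hfi
    _ = ∫ x in S, ∫ pm, f (linv pm x.1 x.2) := by
        refine (setIntegral_eq_integral_of_forall_compl_eq_zero fun x hx ↦ ?_).symm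
        simp only [apply_linv_eq_zero_of_nonpos hsupp _ x.1 (not_lt.1 hx), integral_zero]
    _ = ∫ x in S, ∫ r, massShellIntegrand f x r :=
        setIntegral_congr_fun (measurableSet_lt measurable_const measurable_snd)
          fun x hx ↦ (integral_massShellIntegrand f hx).symm
    _ = ∫ r, ∫ x in S, massShellIntegrand f x r :=
        integral_integral_swap (integrable_massShellIntegrand hf.measurable hfi)
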